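/- Let p ∈ (0,1) and w₀ = −p/(1 + p²), and let f ∈ Σ*(p,w₀). Then |a₂(f) − (1 + p² + p⁴)/(p(1 + p²))| ≤ p/(1 + p²). -/

import Mathlib

open Complex Metric Set

/-- The second Taylor coefficient `a₂(f) = f''(0)/2`. -/
noncomputable def a2 (f : ℂ → ℂ) : ℂ := iteratedDeriv 2 f 0 / 2

/-- `f` belongs to the class `Σ*(p, w₀)` with associated holomorphic function `P`:
`f` is holomorphic on the unit disc except for a simple pole at `p`, `f 0 = 0`,
`f' 0 = 1`, `f` omits `w₀`, and
`P z = -z f'(z)/(f z - w₀) - p/(z - p) + p z/(1 - p z)` extends holomorphically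
to the unit disc with `P 0 = 1` and `Re (P z) > 0` there. -/
def SigmaStarWith (p : ℝ) (w₀ : ℂ) (f P : ℂ → ℂ) : Prop :=
  (∃ g : ℂ → ℂ, DifferentiableOn ℂ g (ball (0 : ℂ) 1) ∧ g p ≠ 0 ∧
      ∀ z ∈ ball (0 : ℂ) 1, z ≠ (p : ℂ) → f z = g z / (z - p)) ∧
  f 0 = 0 ∧ deriv f 0 = 1 ∧
  (∀ z ∈ ball (0 : ℂ) 1, z ≠ (p : ℂ) → f z ≠ w₀) ∧
  DifferentiableOn ℂ P (ball (0 : ℂ) 1) ∧ P 0 = 1 ∧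
  (∀ z ∈ ball (0 : ℂ) 1, 0 < (P z).re) ∧
  (∀ z ∈ ball (0 : ℂ) 1, z ≠ (p : ℂ) →
    P z = -z * deriv f z / (f z - w₀) - p / (z - p) + p * z / (1 - p * z))

/-- `f` belongs to the class `Σ*(p, w₀)`. -/
def SigmaStar (p : ℝ) (w₀ : ℂ) (f : ℂ → ℂ) : Prop :=
  ∃ P : ℂ → ℂ, SigmaStarWith p w₀ f P

/-- `ω` is the Schwarz function associated to `P`, i.e. a holomorphic self-map of
the unit disc fixing `0` with `P = (1 + ω)/(1 - ω)`. -/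
def SchwarzOf (P ω : ℂ → ℂ) : Prop :=
  DifferentiableOn ℂ ω (ball (0 : ℂ) 1) ∧
  MapsTo ω (ball (0 : ℂ) 1) (ball (0 : ℂ) 1) ∧ ω 0 = 0 ∧
  ∀ z ∈ ball (0 : ℂ) 1, P z = (1 + ω z) / (1 - ω z)

/-!
Near `0` the defining relation of `Σ*(p, w₀)` reads `(P - T) (f - w₀) + z f' = 0`, where
`T z = poleTerm p z = p z / (1 - p z) - p / (z - p) = 1 + (p + p⁻¹) z + (p² + p⁻²) z² + ⋯`.
Comparing the coefficients of `z` and `z²` gives `w₀ (P'(0) - p - p⁻¹) = 1` and an affine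
relation between `f''(0)` and `P''(0)`. Since `1 / w₀ = -(p + p⁻¹)`, the first one forces
`P'(0) = 0`, and the second becomes `a₂(f) - (1 + p² + p⁴) / (p (1 + p²)) = w₀ P''(0) / 4`.
Finally `‖P''(0)‖ ≤ 4`: the Cayley transform `ω = (P - 1) / (P + 1)` maps the disc to itself
with `ω(0) = ω'(0) = 0`, so the Schwarz lemma applied to `dslope ω 0` bounds `ω''(0) = P''(0) / 2`.
-/

open Filter Topology

theorem iteratedDeriv_two_mul {𝕜 : Type*} [NontriviallyNormedField 𝕜] {u v : 𝕜 → 𝕜} {x : 𝕜}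
    (hu : ContDiffAt 𝕜 2 u x) (hv : ContDiffAt 𝕜 2 v x) :
    iteratedDeriv 2 (fun z => u z * v z) x =
      iteratedDeriv 2 u x * v x + 2 * deriv u x * deriv v x + u x * iteratedDeriv 2 v x := by
  rw [iteratedDeriv_fun_mul hu hv]
  simp only [Finset.sum_range_succ, Finset.range_one, Finset.sum_singleton, Nat.choose_zero_right,
    Nat.choose_succ_self_right, Nat.choose_self, Nat.cast_one, iteratedDeriv_zero,
    iteratedDeriv_one, Nat.add_one_sub_one, tsub_zero, tsub_self, one_mul]
  ring

theorem iteratedDeriv_two_eq_two_mul_deriv_dslope {f : ℂ → ℂ} {c : ℂ} (hf : AnalyticAt ℂ f c) :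
    iteratedDeriv 2 f c = 2 * deriv (dslope f c) c := by
  obtain ⟨r, hr, hfr⟩ := hf.exists_ball_analyticOnNhd
  have hslope : AnalyticAt ℂ (dslope f c) c :=
    ((differentiableOn_dslope (ball_mem_nhds c hr)).2 hfr.differentiableOn).analyticAt
      (ball_mem_nhds c hr)
  have hf_eq : f = fun z => f c + (z - c) * dslope f c z := by
    funext z
    rw [← smul_eq_mul, sub_smul_dslope, add_sub_cancel]
  conv_lhs => rw [hf_eq, iteratedDeriv_const_add two_pos,
    iteratedDeriv_two_mul (by fun_prop) hslope.contDiffAt]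
  simp [iteratedDeriv_succ]

theorem norm_iteratedDeriv_two_le_of_mapsTo_ball {f : ℂ → ℂ} {c : ℂ} {R₁ R₂ : ℝ}
    (hd : DifferentiableOn ℂ f (ball c R₁)) (h_maps : MapsTo f (ball c R₁) (closedBall (f c) R₂))
    (h₀ : 0 < R₁) (hf' : deriv f c = 0) :
    ‖iteratedDeriv 2 f c‖ ≤ 2 * R₂ / R₁ ^ 2 := by
  have hslope_maps : MapsTo (dslope f c) (ball c R₁) (closedBall (dslope f c c) (R₂ / R₁)) := by
    intro z hz
    rw [dslope_same, hf', mem_closedBall_zero_iff]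
    exact norm_dslope_le_div_of_mapsTo_ball hd h_maps hz
  have hslope_d : DifferentiableOn ℂ (dslope f c) (ball c R₁) :=
    (differentiableOn_dslope (ball_mem_nhds c h₀)).2 hd
  have hbound := norm_deriv_le_div_of_mapsTo_ball hslope_d hslope_maps h₀
  rw [iteratedDeriv_two_eq_two_mul_deriv_dslope (hd.analyticAt (ball_mem_nhds c h₀)), norm_mul,
    Complex.norm_two]
  calc 2 * ‖deriv (dslope f c) c‖ ≤ 2 * (R₂ / R₁ / R₁) := by gcongr
    _ = 2 * R₂ / R₁ ^ 2 := by ring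

theorem add_one_ne_zero_of_re_pos {w : ℂ} (hw : 0 < w.re) : w + 1 ≠ 0 := fun h => by
  have := congrArg re h
  simp only [add_re, one_re, zero_re] at this
  linarith

theorem norm_sub_one_div_add_one_lt_one {w : ℂ} (hw : 0 < w.re) : ‖(w - 1) / (w + 1)‖ < 1 := by
  rw [norm_div, div_lt_one (norm_pos_iff.2 (add_one_ne_zero_of_re_pos hw))]
  refine lt_of_pow_lt_pow_left₀ 2 (norm_nonneg _) ?_
  rw [Complex.sq_norm, Complex.sq_norm, normSq_apply, normSq_apply]
  simp only [sub_re, sub_im, add_re, add_im, one_re, one_im]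
  nlinarith

theorem norm_iteratedDeriv_two_le_of_re_pos {P : ℂ → ℂ} {c : ℂ} {R : ℝ}
    (hP : DifferentiableOn ℂ P (ball c R)) (hR : 0 < R) (hPc : P c = 1)
    (hre : ∀ z ∈ ball c R, 0 < (P z).re) (hP' : deriv P c = 0) :
    ‖iteratedDeriv 2 P c‖ ≤ 4 / R ^ 2 := by
  have hU : ball c R ∈ 𝓝 c := ball_mem_nhds c hR
  have hden : ∀ z ∈ ball c R, P z + 1 ≠ 0 := fun z hz => add_one_ne_zero_of_re_pos (hre z hz)
  set ω : ℂ → ℂ := fun z => (P z - 1) / (P z + 1)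
  have hω : DifferentiableOn ℂ ω (ball c R) :=
    (hP.sub_const 1).div (hP.add_const 1) hden
  have hωc : ω c = 0 := by simp [ω, hPc]
  have hω_maps : MapsTo ω (ball c R) (closedBall (ω c) 1) := fun z hz => by
    rw [hωc, mem_closedBall_zero_iff]
    exact (norm_sub_one_div_add_one_lt_one (hre z hz)).le
  have hPan : AnalyticAt ℂ P c := hP.analyticAt hU
  have hωan : AnalyticAt ℂ ω c := hω.analyticAt hU
  have hmul : (fun z => ω z * (P z + 1)) =ᶠ[𝓝 c] fun z => P z - 1 :=
    eventually_of_mem hU fun z hz => div_mul_cancel₀ _ (hden z hz)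
  have hω' : deriv ω c = 0 := by
    have h := hmul.deriv_eq
    rw [deriv_fun_mul hωan.differentiableAt (hPan.differentiableAt.add_const 1), deriv_sub_const,
      deriv_add_const, hωc, hPc, hP'] at h
    simpa using h
  have hω'' : iteratedDeriv 2 P c = 2 * iteratedDeriv 2 ω c := by
    have h := hmul.iteratedDeriv_eq 2
    rw [iteratedDeriv_two_mul hωan.contDiffAt (hPan.fun_add analyticAt_const).contDiffAt] at h
    simp only [iteratedDeriv_succ, iteratedDeriv_zero, deriv_add_const', deriv_sub_const_fun,
      hωc, hω', hPc] at h ⊢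
    linear_combination -h
  have hbound := norm_iteratedDeriv_two_le_of_mapsTo_ball hω hω_maps hR hω'
  calc ‖iteratedDeriv 2 P c‖ = 2 * ‖iteratedDeriv 2 ω c‖ := by
        rw [hω'', norm_mul, Complex.norm_two]
    _ ≤ 2 * (2 * 1 / R ^ 2) := by gcongr
    _ = 4 / R ^ 2 := by ring

section InvOneSubMul

variable {𝕜 : Type*} [NontriviallyNormedField 𝕜] (c : 𝕜)

theorem hasDerivAt_inv_one_sub_mul {z : 𝕜} (h : 1 - c * z ≠ 0) :
    HasDerivAt (fun z => (1 - c * z)⁻¹) (c * (1 - c * z)⁻¹ ^ 2) z := by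
  have hlin : HasDerivAt (fun z => 1 - c * z) (-c) z := by
    simpa using ((hasDerivAt_id z).const_mul c).const_sub 1
  exact (hlin.inv h).congr_deriv (by rw [neg_neg, inv_pow, div_eq_mul_inv])

theorem contDiffAt_inv_one_sub_mul_zero {n : WithTop ℕ∞} :
    ContDiffAt 𝕜 n (fun z => (1 - c * z)⁻¹) 0 :=
  (contDiffAt_const.sub (contDiffAt_const.mul contDiffAt_id)).inv (by simp)

theorem iteratedDeriv_two_inv_one_sub_mul_zero :
    iteratedDeriv 2 (fun z => (1 - c * z)⁻¹) 0 = 2 * c ^ 2 := by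
  have hnear : ∀ᶠ z in 𝓝 (0 : 𝕜), 1 - c * z ≠ 0 :=
    (continuous_const.sub (continuous_const.mul continuous_id)).continuousAt.eventually_ne
      (by simp)
  have hderiv : deriv (fun z => (1 - c * z)⁻¹) =ᶠ[𝓝 0] fun z => c * (1 - c * z)⁻¹ ^ 2 :=
    hnear.mono fun z hz => (hasDerivAt_inv_one_sub_mul c hz).deriv
  rw [iteratedDeriv_succ, iteratedDeriv_one, hderiv.deriv_eq,
    (((hasDerivAt_inv_one_sub_mul c (z := 0) (by simp)).fun_pow 2).const_mul c).deriv]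
  simp only [mul_zero, sub_zero, inv_one, one_pow, mul_one, Nat.cast_ofNat, Nat.add_one_sub_one]
  ring

end InvOneSubMul

section PoleTerm

variable {𝕜 : Type*} [NontriviallyNormedField 𝕜] {p : 𝕜}

def poleTerm (p z : 𝕜) : 𝕜 := p * z / (1 - p * z) - p / (z - p)

theorem poleTerm_eventuallyEq (hp : p ≠ 0) :
    poleTerm p =ᶠ[𝓝 0] fun z => (1 - p * z)⁻¹ + (1 - p⁻¹ * z)⁻¹ - 1 := by
  have hnear : ∀ᶠ z in 𝓝 (0 : 𝕜), 1 - p * z ≠ 0 ∧ z - p ≠ 0 :=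
    ((continuous_const.sub (continuous_const.mul continuous_id)).continuousAt.eventually_ne
      (by simp)).and ((continuous_id.sub continuous_const).continuousAt.eventually_ne (by simpa))
  filter_upwards [hnear] with z ⟨h₁, h₂⟩
  have h₃ : p - z ≠ 0 := sub_ne_zero.2 (Ne.symm (sub_ne_zero.1 h₂))
  rw [poleTerm, show 1 - p⁻¹ * z = (p - z) / p by field_simp, inv_div]
  field_simp
  ring

theorem contDiffAt_poleTerm_zero (hp : p ≠ 0) {n : WithTop ℕ∞} :
    ContDiffAt 𝕜 n (poleTerm p) 0 :=
  ((contDiffAt_inv_one_sub_mul_zero p).add (contDiffAt_inv_one_sub_mul_zero p⁻¹)).sub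
    contDiffAt_const |>.congr_of_eventuallyEq (poleTerm_eventuallyEq hp)

theorem poleTerm_zero (hp : p ≠ 0) : poleTerm p 0 = 1 := by
  simp [poleTerm, hp]

theorem deriv_poleTerm_zero (hp : p ≠ 0) : deriv (poleTerm p) 0 = p + p⁻¹ := by
  rw [(poleTerm_eventuallyEq hp).deriv_eq,
    (((hasDerivAt_inv_one_sub_mul p (z := 0) (by simp)).fun_add
      (hasDerivAt_inv_one_sub_mul p⁻¹ (z := 0) (by simp))).sub_const 1).deriv]
  simp

theorem iteratedDeriv_two_poleTerm_zero (hp : p ≠ 0) :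
    iteratedDeriv 2 (poleTerm p) 0 = 2 * (p ^ 2 + p⁻¹ ^ 2) := by
  have h₁ := contDiffAt_inv_one_sub_mul_zero (n := 2) p
  have h₂ := contDiffAt_inv_one_sub_mul_zero (n := 2) p⁻¹
  rw [(poleTerm_eventuallyEq hp).iteratedDeriv_eq,
    iteratedDeriv_fun_sub (h₁.add h₂) contDiffAt_const, iteratedDeriv_fun_add h₁ h₂,
    iteratedDeriv_two_inv_one_sub_mul_zero, iteratedDeriv_two_inv_one_sub_mul_zero,
    iteratedDeriv_const]
  simp only [inv_pow, OfNat.ofNat_ne_zero, ↓reduceIte, sub_zero]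
  ring

end PoleTerm

theorem one_add_ofReal_sq_ne_zero (p : ℝ) : (1 : ℂ) + (p : ℂ) ^ 2 ≠ 0 := by
  exact_mod_cast (by positivity : (0 : ℝ) < 1 + p ^ 2).ne'

theorem eventually_mem_ball_one_and_ne {a : ℂ} (ha : a ≠ 0) :
    ∀ᶠ z in 𝓝 (0 : ℂ), z ∈ ball (0 : ℂ) 1 ∧ z ≠ a :=
  Eventually.and (ball_mem_nhds 0 one_pos) (eventually_ne_nhds ha.symm)

namespace SigmaStarWith

variable {p : ℝ} {w₀ : ℂ} {f P : ℂ → ℂ}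

theorem analyticAt_zero (h : SigmaStarWith p w₀ f P) (hp : p ≠ 0) : AnalyticAt ℂ f 0 := by
  obtain ⟨⟨g, hg, -, hfg⟩, -⟩ := h
  have hquot : AnalyticAt ℂ (fun z => g z / (z - p)) 0 :=
    (hg.analyticAt (ball_mem_nhds 0 one_pos)).div (analyticAt_id.sub analyticAt_const)
      (by simpa using hp)
  exact hquot.congr <| (eventually_mem_ball_one_and_ne (ofReal_ne_zero.2 hp)).mono
    fun z hz => (hfg z hz.1 hz.2).symm

theorem analyticAt_P_zero (h : SigmaStarWith p w₀ f P) : AnalyticAt ℂ P 0 := by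
  obtain ⟨-, -, -, -, hP, -⟩ := h
  exact hP.analyticAt (ball_mem_nhds 0 one_pos)

theorem eventuallyEq_zero (h : SigmaStarWith p w₀ f P) (hp : p ≠ 0) :
    (fun z => (P z - poleTerm (p : ℂ) z) * (f z - w₀) + z * deriv f z) =ᶠ[𝓝 0] 0 := by
  obtain ⟨-, -, -, hfw, -, -, -, hPf⟩ := h
  filter_upwards [eventually_mem_ball_one_and_ne (ofReal_ne_zero.2 hp)] with z ⟨hz, hzp⟩
  rw [hPf z hz hzp, poleTerm, Pi.zero_apply]
  field_simp [sub_ne_zero.2 (hfw z hz hzp)]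
  ring

theorem mul_deriv_sub_eq_one (h : SigmaStarWith p w₀ f P) (hp : p ≠ 0) :
    w₀ * (deriv P 0 - (p + (p : ℂ)⁻¹)) = 1 := by
  have hpC : (p : ℂ) ≠ 0 := by exact_mod_cast hp
  have hf := h.analyticAt_zero hp
  have hT : HasDerivAt (poleTerm (p : ℂ)) (p + (p : ℂ)⁻¹) 0 := by
    rw [← deriv_poleTerm_zero hpC]
    exact ((contDiffAt_poleTerm_zero hpC (n := 1)).differentiableAt one_ne_zero).hasDerivAt
  have hF := ((h.analyticAt_P_zero.differentiableAt.hasDerivAt.sub hT).mul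
    (hf.differentiableAt.hasDerivAt.sub_const w₀)).add
    ((hasDerivAt_id' 0).mul hf.deriv.differentiableAt.hasDerivAt)
  have hzero := hF.unique ((hasDerivAt_const 0 0).congr_of_eventuallyEq (h.eventuallyEq_zero hp))
  obtain ⟨-, hf0, hf'0, -, -, hP0, -, -⟩ := h
  simp only [Pi.sub_apply, poleTerm_zero hpC, hf0, hf'0, hP0] at hzero
  linear_combination -hzero

theorem mul_iteratedDeriv_two_sub_eq (h : SigmaStarWith p w₀ f P) (hp : p ≠ 0) :
    w₀ * (iteratedDeriv 2 P 0 - 2 * (p ^ 2 + (p : ℂ)⁻¹ ^ 2)) =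
      2 * (deriv P 0 - (p + (p : ℂ)⁻¹)) + 2 * iteratedDeriv 2 f 0 := by
  have hpC : (p : ℂ) ≠ 0 := by exact_mod_cast hp
  have hf := h.analyticAt_zero hp
  have hP := h.analyticAt_P_zero
  have hT := contDiffAt_poleTerm_zero hpC (n := 2)
  have hA : ContDiffAt ℂ 2 (fun z => P z - poleTerm (p : ℂ) z) 0 := hP.contDiffAt.sub hT
  have hzero := (h.eventuallyEq_zero hp).iteratedDeriv_eq 2
  obtain ⟨-, hf0, hf'0, -, -, hP0, -, -⟩ := h
  have hu : ContDiffAt ℂ 2 (fun z => f z - w₀) 0 := hf.contDiffAt.sub contDiffAt_const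
  have hf' : ContDiffAt ℂ 2 (deriv f) 0 := hf.deriv.contDiffAt
  rw [iteratedDeriv_fun_add (hA.mul hu) (contDiffAt_fun_id.mul hf'), iteratedDeriv_two_mul hA hu,
    iteratedDeriv_two_mul contDiffAt_fun_id hf',
    iteratedDeriv_fun_sub hP.contDiffAt hT, iteratedDeriv_two_poleTerm_zero hpC,
    deriv_fun_sub hP.differentiableAt (hT.differentiableAt two_ne_zero), deriv_poleTerm_zero hpC,
    poleTerm_zero hpC] at hzero
  simp only [iteratedDeriv_succ, iteratedDeriv_zero, iteratedDeriv_const_zero, deriv_sub_const_fun,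
    deriv_id'', deriv_const', hf0, hf'0, hP0] at hzero ⊢
  linear_combination -hzero

theorem deriv_P_zero_eq_zero (h : SigmaStarWith p w₀ f P) (hp : p ≠ 0)
    (hw : w₀ = -(p : ℂ) / (1 + (p : ℂ) ^ 2)) : deriv P 0 = 0 := by
  have hpC : (p : ℂ) ≠ 0 := ofReal_ne_zero.2 hp
  have hrel := h.mul_deriv_sub_eq_one hp
  rw [hw] at hrel
  field_simp [one_add_ofReal_sq_ne_zero p] at hrel
  have hpP' : (p : ℂ) * deriv P 0 = 0 := by linear_combination -hrel
  exact (mul_eq_zero.1 hpP').resolve_left hpC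

theorem a2_sub_eq (h : SigmaStarWith p w₀ f P) (hp : p ≠ 0)
    (hw : w₀ = -(p : ℂ) / (1 + (p : ℂ) ^ 2)) :
    a2 f - (1 + (p : ℂ) ^ 2 + (p : ℂ) ^ 4) / (p * (1 + (p : ℂ) ^ 2)) =
      w₀ * iteratedDeriv 2 P 0 / 4 := by
  have hpC : (p : ℂ) ≠ 0 := ofReal_ne_zero.2 hp
  have hrel := h.mul_iteratedDeriv_two_sub_eq hp
  rw [h.deriv_P_zero_eq_zero hp hw, hw] at hrel
  rw [a2, hw]
  field_simp [one_add_ofReal_sq_ne_zero p] at hrel ⊢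
  linear_combination -2 * hrel

end SigmaStarWith

theorem stmt_12 (p : ℝ) (hp : 0 < p ∧ p < 1) (w₀ : ℂ)
    (hw : w₀ = -(p : ℂ) / (1 + (p : ℂ) ^ 2))
    (f : ℂ → ℂ) (hf : SigmaStar p w₀ f) :
    ‖a2 f - (1 + (p : ℂ) ^ 2 + (p : ℂ) ^ 4) / (p * (1 + (p : ℂ) ^ 2))‖ ≤
      p / (1 + p ^ 2) := by
  obtain ⟨P, hfP⟩ := hf
  have hp2 : (0 : ℝ) < 1 + p ^ 2 := by positivity
  have hw_norm : ‖w₀‖ = p / (1 + p ^ 2) := by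
    rw [hw, norm_div, norm_neg, ← ofReal_one, ← ofReal_pow, ← ofReal_add, Complex.norm_real,
      Complex.norm_real, Real.norm_of_nonneg hp.1.le, Real.norm_of_nonneg hp2.le]
  have hP'' : ‖iteratedDeriv 2 P 0‖ ≤ 4 := by
    have hP' := hfP.deriv_P_zero_eq_zero hp.1.ne' hw
    obtain ⟨-, -, -, -, hPd, hP0, hPre, -⟩ := hfP
    simpa using norm_iteratedDeriv_two_le_of_re_pos hPd one_pos hP0 hPre hP'
  rw [hfP.a2_sub_eq hp.1.ne' hw, norm_div, norm_mul, hw_norm, Complex.norm_ofNat]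
  calc p / (1 + p ^ 2) * ‖iteratedDeriv 2 P 0‖ / 4 ≤ p / (1 + p ^ 2) * 4 / 4 := by
        gcongr
        exact div_nonneg hp.1.le hp2.le
    _ = p / (1 + p ^ 2) := by ring
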